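/- arXiv:2509.20599 — 6 statements merged into one kernel-verified Lean document; each statement's English description precedes it below -/
import Mathlib

section
/- For every x ∈ ℝ with x ∉ {1, 1/2, −1/2}, every λ ∈ ℂ and every step size h ∈ ℝ, applying one step of the EES(2,5;x) scheme to the linear vector field f(y) = λ·y starting from y ∈ ℂ produces the value R(λh)·y, where R(ρ) = 1 + ρ + ρ²/2 + ρ³/8. In particular, the stability function of EES(2,5;x) is independent of the parameter x. -/
/-- One step of the EES(2,5;x) scheme applied to the linear
vector field `f(y) = λ·y` starting from `y` yields `R(λh)·y`, where
`R(ρ) = 1 + ρ + ρ²/2 + ρ³/8`; in particular the stability function is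
independent of the parameter `x`. -/
theorem ees25_linear_step (x : ℝ) (hx1 : x ≠ 1) (hx2 : x ≠ 1/2) (hx3 : x ≠ -1/2)
    (lam : ℂ) (h : ℝ) (y : ℂ) :
    let a21 : ℝ := (1 + 2*x) / (4*(1 - x))
    let a31 : ℝ := (4*x - 1)^2 / (4*(x - 1)*(1 - 4*x^2))
    let a32 : ℝ := (1 - x) / (1 - 4*x^2)
    let b1 : ℝ := x
    let b2 : ℝ := 1/2
    let b3 : ℝ := 1/2 - x
    let k1 : ℂ := y
    let k2 : ℂ := y + (h : ℂ) * (a21 : ℂ) * (lam * k1)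
    let k3 : ℂ := y + (h : ℂ) * ((a31 : ℂ) * (lam * k1) + (a32 : ℂ) * (lam * k2))
    y + (h : ℂ) * ((b1 : ℂ) * (lam * k1) + (b2 : ℂ) * (lam * k2) + (b3 : ℂ) * (lam * k3))
      = (1 + lam * h + (lam * h)^2 / 2 + (lam * h)^3 / 8) * y := by
  intro a21 a31 a32 b1 b2 b3 k1 k2 k3
  have h1 : (1 : ℝ) - x ≠ 0 := fun hc => hx1 (by linarith)
  have h2 : (x : ℝ) - 1 ≠ 0 := fun hc => hx1 (by linarith)
  have h3 : (1 : ℝ) - 4*x^2 ≠ 0 := by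
    intro hc
    have : ((1:ℝ) - 2*x) * (1 + 2*x) = 0 := by linarith [sq_nonneg x]; 
    rcases mul_eq_zero.1 this with hc2 | hc2
    · exact hx2 (by linarith)
    · exact hx3 (by linarith)
  have c2 : b2 * a21 + b3 * (a31 + a32) = 1/2 := by
    have h3' : (1:ℝ) - x^2*4 ≠ 0 := by rwa [mul_comm]
    simp only [a21, a31, a32, b2, b3]; field_simp; ring
  have c3 : b3 * (a32 * a21) = 1/8 := by
    have h3' : (1:ℝ) - x^2*4 ≠ 0 := by rwa [mul_comm]
    simp only [a21, a32, b3]; field_simp; ring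
  have c1 : b1 + b2 + b3 = 1 := by simp only [b1, b2, b3]; ring
  have c1' : ((b1 : ℂ) + b2 + b3) = 1 := by have := congrArg Complex.ofReal c1; push_cast at this; exact this
  have c2' : ((b2 : ℂ) * a21 + b3 * (a31 + a32)) = 1/2 := by have := congrArg Complex.ofReal c2; push_cast at this; exact this
  have c3' : ((b3 : ℂ) * (a32 * a21)) = 1/8 := by have := congrArg Complex.ofReal c3; push_cast at this; exact this
  simp only [k1, k2, k3]
  linear_combination (lam * h * y) * c1' + ((lam*h)^2 * y) * c2' + ((lam*h)^3 * y) * c3'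
end

section
/- Suppose that, for some x ∈ ℝ with x ∉ {1, 1/2, −1/2}, the EES(2,5;x) scheme with step size h > 0 is used to obtain a solution {yₙ}ₙ≥0 of the linear test equation dy = λy dt (i.e. yₙ₊₁ is one EES(2,5;x) step with vector field f(y) = λ·y from yₙ), where λ ∈ ℂ and y₀ ≠ 0. Then yₙ → 0 as n → ∞ if and only if |1 + ρ + ρ²/2 + ρ³/8| < 1, where ρ = λh. -/
open Filter

/-- If `{yₙ}` is produced by the EES(2,5;x) scheme with step
size `h > 0` applied to the linear test equation `dy = λ y dt` with `y₀ ≠ 0`,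
then `yₙ → 0` iff `|1 + ρ + ρ²/2 + ρ³/8| < 1` where `ρ = λh`. -/
theorem ees25_linear_stability (x : ℝ) (hx1 : x ≠ 1) (hx2 : x ≠ 1/2) (hx3 : x ≠ -1/2)
    (lam : ℂ) (h : ℝ) (hh : 0 < h) (y : ℕ → ℂ) (hy0 : y 0 ≠ 0)
    (hstep : ∀ n : ℕ,
      y (n + 1) =
        let a21 : ℝ := (1 + 2*x) / (4*(1 - x))
        let a31 : ℝ := (4*x - 1)^2 / (4*(x - 1)*(1 - 4*x^2))
        let a32 : ℝ := (1 - x) / (1 - 4*x^2)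
        let b1 : ℝ := x
        let b2 : ℝ := 1/2
        let b3 : ℝ := 1/2 - x
        let k1 : ℂ := y n
        let k2 : ℂ := y n + (h : ℂ) * (a21 : ℂ) * (lam * k1)
        let k3 : ℂ := y n + (h : ℂ) * ((a31 : ℂ) * (lam * k1) + (a32 : ℂ) * (lam * k2))
        y n + (h : ℂ) * ((b1 : ℂ) * (lam * k1) + (b2 : ℂ) * (lam * k2) + (b3 : ℂ) * (lam * k3))) :
    Tendsto y atTop (nhds 0) ↔
      ‖1 + lam * h + (lam * h)^2 / 2 + (lam * h)^3 / 8‖ < 1 := by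
  set R : ℂ := 1 + lam * h + (lam * h)^2 / 2 + (lam * h)^3 / 8 with hR
  have hxa : (1 : ℝ) - x ≠ 0 := by intro hc; apply hx1; linarith
  have hxb : x - 1 ≠ 0 := by intro hc; apply hx1; linarith
  have hxc : (1 : ℝ) - 4*x^2 ≠ 0 := by
    intro hc
    have h0 : (1 - 2*x) * (1 + 2*x) = 0 := by nlinarith [hc]
    rcases mul_eq_zero.1 h0 with h1 | h1
    · apply hx2; linarith
    · apply hx3; linarith
  set a21 : ℝ := (1 + 2*x) / (4*(1 - x)) with ha21
  set a31 : ℝ := (4*x - 1)^2 / (4*(x - 1)*(1 - 4*x^2)) with ha31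
  set a32 : ℝ := (1 - x) / (1 - 4*x^2) with ha32
  have e1 : x + 1/2 + (1/2 - x) = 1 := by ring
  have hxd : (1:ℝ) - 2*x ≠ 0 := fun hc => hxc (by linear_combination (1 + 2*x) * hc)
  have hxe : (1:ℝ) + 2*x ≠ 0 := fun hc => hxc (by linear_combination (1 - 2*x) * hc)
  have e2 : (1/2) * a21 + (1/2 - x) * (a31 + a32) = 1/2 := by
    rw [ha21, ha31, ha32, show (1:ℝ) - 4*x^2 = (1 - 2*x)*(1+2*x) by ring]; field_simp; ring
  have e3 : (1/2 - x) * a32 * a21 = 1/8 := by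
    rw [ha21, ha32, show (1:ℝ) - 4*x^2 = (1 - 2*x)*(1+2*x) by ring]; field_simp; ring
  have key : ∀ n, y (n + 1) = R * y n := by
    intro n
    rw [hstep n]
    simp only [← ha21, ← ha31, ← ha32]
    have expand :
        y n + (h : ℂ) * ((x : ℂ) * (lam * y n) + ((1/2 : ℝ) : ℂ) * (lam * (y n + (h : ℂ) * (a21 : ℂ) * (lam * y n)))
          + (((1/2 - x : ℝ)) : ℂ) * (lam * (y n + (h : ℂ) * ((a31 : ℂ) * (lam * y n) + (a32 : ℂ) * (lam * (y n + (h : ℂ) * (a21 : ℂ) * (lam * y n)))))))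
        = (1 + lam * h * ((x + 1/2 + (1/2 - x) : ℝ) : ℂ)
            + (lam * h)^2 * (((1/2) * a21 + (1/2 - x) * (a31 + a32) : ℝ) : ℂ)
            + (lam * h)^3 * (((1/2 - x) * a32 * a21 : ℝ) : ℂ)) * y n := by
      push_cast
      ring
    have e1C : ((x:ℂ) + 1/2 + (1/2 - (x:ℂ))) = 1 := by ring
    have e2C : (1/2 : ℂ) * (a21:ℂ) + (1/2 - (x:ℂ)) * ((a31:ℂ) + (a32:ℂ)) = 1/2 := by
      have := congrArg (fun t : ℝ => (t : ℂ)) e2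
      push_cast at this
      linear_combination this
    have e3C : (1/2 - (x:ℂ)) * (a32:ℂ) * (a21:ℂ) = 1/8 := by
      have := congrArg (fun t : ℝ => (t : ℂ)) e3
      push_cast at this
      linear_combination this
    push_cast
    push_cast at expand
    rw [expand, e1C, e2C, e3C, hR]
    ring
  have hyn : ∀ n, y n = R ^ n * y 0 := by
    intro n
    induction n with
    | zero => simp
    | succ n ih => rw [key n, ih]; ring
  constructor
  · intro ht
    by_contra hcon
    push_neg at hcon
    have hnorm : ∀ n, ‖y 0‖ ≤ ‖y n‖ := by
      intro n
      rw [hyn n, norm_mul, norm_pow]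
      have h1 : (1:ℝ) ≤ ‖R‖ ^ n := one_le_pow₀ hcon
      nlinarith [norm_nonneg (y 0)]
    have h0 : Tendsto (fun n => ‖y n‖) atTop (nhds 0) := by
      simpa using ht.norm
    have : ‖y 0‖ ≤ 0 := le_of_tendsto_of_tendsto tendsto_const_nhds h0
      (Eventually.of_forall hnorm)
    exact hy0 (norm_le_zero_iff.mp this)
  · intro hlt
    have : Tendsto (fun n => R ^ n * y 0) atTop (nhds (0 * y 0)) :=
      (tendsto_pow_atTop_nhds_zero_of_norm_lt_one hlt).mul_const _
    simp only [zero_mul] at this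
    exact this.congr (fun n => (hyn n).symm)
end

section
/- Let f : ℝ^q → ℝ^q be infinitely differentiable (C^∞), fix x ∈ ℝ with x ∉ {1, 1/2, −1/2}, and let Φ_h denote one step of the EES(2,5;x) scheme applied to the vector field f with step size h. Let y : ℝ → ℝ^q be a solution of the ODE y'(t) = f(y(t)) on a neighbourhood of 0 with y(0) = y₀. Then the local error satisfies ‖Φ_h(y₀) − y(h)‖ = O(h³) as h → 0; that is, the EES(2,5;x) scheme has order (at least) 2. -/
open Filter Asymptotics Set

lemma mvstep {E : Type*} [NormedAddCommGroup E] [NormedSpace ℝ E] {g g' : ℝ → E} (n : ℕ)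
    (hd : ∀ᶠ t in nhds (0:ℝ), HasDerivAt g (g' t) t) (h0 : g 0 = 0)
    (hO : g' =O[nhds (0:ℝ)] fun h => h ^ n) : g =O[nhds (0:ℝ)] fun h => h ^ (n+1) := by
  obtain ⟨C, hCpos, hCw⟩ := hO.exists_pos
  have hb : ∀ᶠ t in nhds (0:ℝ), ‖g' t‖ ≤ C * |t| ^ n := by
    filter_upwards [hCw.bound] with t ht
    simpa [abs_pow] using ht
  obtain ⟨ε, hεpos, hε⟩ := Metric.eventually_nhds_iff.1 (hd.and hb)
  rw [isBigO_iff]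
  refine ⟨C, Metric.eventually_nhds_iff.2 ⟨ε, hεpos, fun {h} hh => ?_⟩⟩
  simp only [dist_zero_right, Real.norm_eq_abs] at hh ⊢
  have key : ∀ t ∈ uIcc (0:ℝ) h, |t| ≤ |h| := by
    intro t ht
    rw [uIcc_eq_union] at ht
    rcases ht with ht | ht
    · exact abs_le.2 ⟨le_trans (neg_nonpos.2 (abs_nonneg h)) ht.1, le_trans ht.2 (le_abs_self h)⟩
    · exact abs_le.2 ⟨le_trans (neg_abs_le h) ht.1, le_trans ht.2 (abs_nonneg h)⟩
  have hmem : ∀ t ∈ uIcc (0:ℝ) h, dist t 0 < ε := fun t ht => by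
    simpa [dist_zero_right] using lt_of_le_of_lt (key t ht) hh
  have := Convex.norm_image_sub_le_of_norm_hasDerivWithin_le
    (f := g) (f' := g') (s := uIcc (0:ℝ) h) (C := C * |h| ^ n)
    (fun t ht => ((hε (hmem t ht)).1).hasDerivWithinAt)
    (fun t ht => le_trans (hε (hmem t ht)).2
      (mul_le_mul_of_nonneg_left (pow_le_pow_left₀ (abs_nonneg t) (key t ht) n) hCpos.le))
    (convex_uIcc _ _) left_mem_uIcc right_mem_uIcc
  simp only [h0, sub_zero, Real.norm_eq_abs] at this
  calc ‖g h‖ ≤ C * |h| ^ n * |h| := this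
    _ = C * |h ^ (n+1)| := by rw [abs_pow]; ring

lemma smul_isBigO_aux {E : Type*} [NormedAddCommGroup E] [NormedSpace ℝ E] (a : ℝ) (v : E) :
    (fun h : ℝ => (h * a) • v) =O[nhds (0:ℝ)] fun h => h := by
  refine IsBigO.of_bound (|a| * ‖v‖) (Eventually.of_forall fun h => ?_)
  rw [norm_smul, Real.norm_eq_abs (h*a), abs_mul, Real.norm_eq_abs]
  ring_nf
  exact le_of_eq (by ring)

lemma mul_isBigO_aux (a : ℝ) :
    (fun h : ℝ => h * a) =O[nhds (0:ℝ)] fun h => h := by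
  refine IsBigO.of_bound |a| (Eventually.of_forall fun h => ?_)
  rw [Real.norm_eq_abs, Real.norm_eq_abs, abs_mul]
  exact le_of_eq (by ring)

lemma sq_isBigO_aux : (fun h : ℝ => h ^ 2) =O[nhds (0:ℝ)] fun h => h := by
  simpa using (isLittleO_pow_pow (𝕜 := ℝ) one_lt_two).isBigO

lemma stepC {E : Type*} [NormedAddCommGroup E] [NormedSpace ℝ E]
    (f : E → E) (y₀ : E) (D : E →L[ℝ] E)
    (hfc : Continuous f)
    (hAO : (fun v => f (y₀ + v) - f y₀ - D v) =O[nhds (0:E)] fun v => ‖v‖ ^ 2)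
    (a21 a31 a32 b1 b2 b3 : ℝ)
    (hb : b1 + b2 + b3 = 1) (hco : b2 * a21 + b3 * (a31 + a32) = 1/2) :
    (fun h : ℝ => (y₀ + (h*b1) • f y₀ + (h*b2) • f (y₀ + (h*a21) • f y₀)
       + (h*b3) • f (y₀ + (h*a31) • f y₀ + (h*a32) • f (y₀ + (h*a21) • f y₀)))
       - (y₀ + h • f y₀ + (h^2/2) • D (f y₀))) =O[nhds (0:ℝ)] fun h => h ^ 3 := by
  set c := f y₀ with hc
  set w := D c with hw
  -- k2 expansion
  have htv2 : Tendsto (fun h : ℝ => (h * a21) • c) (nhds 0) (nhds 0) := by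
    have : Continuous (fun h : ℝ => (h * a21) • c) :=
      (continuous_id.mul continuous_const).smul continuous_const
    simpa using this.tendsto 0
  have hsq2 : (fun h : ℝ => ‖(h * a21) • c‖ ^ 2) =O[nhds 0] fun h => h ^ 2 := by
    refine IsBigO.of_bound (a21 ^ 2 * ‖c‖ ^ 2) (Eventually.of_forall fun h => ?_)
    rw [Real.norm_eq_abs, abs_of_nonneg (by positivity), norm_smul, Real.norm_eq_abs (h*a21),
      Real.norm_eq_abs (h^2), abs_mul, mul_pow, mul_pow, abs_pow, sq_abs, sq_abs]
    exact le_of_eq (by ring)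
  have hR2 : (fun h : ℝ => f (y₀ + (h*a21) • c) - c - (h*a21) • w) =O[nhds 0]
      fun h => h ^ 2 := by
    have h1 := (hAO.comp_tendsto htv2).trans hsq2
    refine h1.congr_left fun h => ?_
    rw [hw, ← D.map_smul]
    rfl
  have hfk2c : (fun h : ℝ => f (y₀ + (h*a21) • c) - c) =O[nhds 0] fun h => h := by
    have he : (fun h : ℝ => f (y₀ + (h*a21) • c) - c)
        = fun h => (f (y₀ + (h*a21) • c) - c - (h*a21) • w) + (h*a21) • w := by
      funext h; abel
    rw [he]
    exact (hR2.trans sq_isBigO_aux).add (smul_isBigO_aux a21 w)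
  have htf2 : Tendsto (fun h : ℝ => f (y₀ + (h*a21) • c)) (nhds 0) (nhds c) := by
    have : Continuous fun h : ℝ => f (y₀ + (h*a21) • c) :=
      hfc.comp (continuous_const.add ((continuous_id.mul continuous_const).smul continuous_const))
    simpa using this.tendsto 0
  have hf2b : (fun h : ℝ => f (y₀ + (h*a21) • c)) =O[nhds 0] fun _ => (1:ℝ) :=
    htf2.isBigO_one ℝ
  -- k3 expansion
  set v3 : ℝ → E := fun h => (h*a31) • c + (h*a32) • f (y₀ + (h*a21) • c) with hv3
  have hv3O : v3 =O[nhds 0] fun h => h := by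
    have h2 : (fun h : ℝ => (h*a32) • f (y₀ + (h*a21) • c)) =O[nhds 0] fun h => h := by
      have := (mul_isBigO_aux a32).smul hf2b
      simpa using this
    exact (smul_isBigO_aux a31 c).add h2
  have htv3 : Tendsto v3 (nhds 0) (nhds 0) := by
    refine hv3O.trans_tendsto ?_
    exact tendsto_id
  have hbr1 : (fun h : ℝ => f (y₀ + v3 h) - c - D (v3 h)) =O[nhds 0] fun h => h ^ 2 :=
    (hAO.comp_tendsto htv3).trans ((hv3O.norm_left).pow 2)
  have hbr2 : (fun h : ℝ => D (v3 h) - (h*(a31+a32)) • w) =O[nhds 0] fun h => h ^ 2 := by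
    have heq : (fun h : ℝ => D (v3 h) - (h*(a31+a32)) • w)
        = fun h => (h*a32) • (D (f (y₀ + (h*a21) • c) - c)) := by
      funext h
      rw [hv3]
      simp only [map_add, map_smul, map_sub]
      rw [hw]
      module
    rw [heq]
    have hDfk2 : (fun h : ℝ => D (f (y₀ + (h*a21) • c) - c)) =O[nhds 0] fun h => h :=
      (D.isBigO_comp _ _).trans hfk2c
    exact ((mul_isBigO_aux a32).smul hDfk2).congr_right fun h => by
      rw [smul_eq_mul]; ring
  have hR3 : (fun h : ℝ => f (y₀ + (h*a31) • c + (h*a32) • f (y₀ + (h*a21) • c)) - c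
      - (h*(a31+a32)) • w) =O[nhds 0] fun h => h ^ 2 := by
    refine (hbr1.add hbr2).congr_left fun h => ?_
    rw [show y₀ + (h*a31) • c + (h*a32) • f (y₀ + (h*a21) • c) = y₀ + v3 h from add_assoc _ _ _]
    abel
  -- assembly
  have main_eq : (fun h : ℝ => (y₀ + (h*b1) • c + (h*b2) • f (y₀ + (h*a21) • c)
       + (h*b3) • f (y₀ + (h*a31) • c + (h*a32) • f (y₀ + (h*a21) • c)))
       - (y₀ + h • c + (h^2/2) • w))
      = fun h : ℝ => (h*b2) • (f (y₀ + (h*a21) • c) - c - (h*a21) • w)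
       + (h*b3) • (f (y₀ + (h*a31) • c + (h*a32) • f (y₀ + (h*a21) • c)) - c
          - (h*(a31+a32)) • w) := by
    funext h
    match_scalars
    · ring
    · linear_combination h * hb
    · ring
    · ring
    · linear_combination h^2 * hco
  have hO1 : (fun h : ℝ => (h*b2) • (f (y₀ + (h*a21) • c) - c - (h*a21) • w)) =O[nhds 0]
      fun h => h ^ 3 := by
    exact ((mul_isBigO_aux b2).smul hR2).congr_right fun h => by
      rw [smul_eq_mul]; ring
  have hO2 : (fun h : ℝ => (h*b3) • (f (y₀ + (h*a31) • c + (h*a32) • f (y₀ + (h*a21) • c)) - c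
      - (h*(a31+a32)) • w)) =O[nhds 0] fun h => h ^ 3 := by
    exact ((mul_isBigO_aux b3).smul hR3).congr_right fun h => by
      rw [smul_eq_mul]; ring
  rw [main_eq]
  exact hO1.add hO2


/-- One step of the EES(2,5;x) explicit 3-stage Runge–Kutta scheme with step
size `h` applied to the vector field `f`. -/
noncomputable def eesStep {E : Type*} [NormedAddCommGroup E] [NormedSpace ℝ E]
    (x : ℝ) (f : E → E) (h : ℝ) (y : E) : E :=
  let a21 : ℝ := (1 + 2*x) / (4*(1 - x))
  let a31 : ℝ := (4*x - 1)^2 / (4*(x - 1)*(1 - 4*x^2))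
  let a32 : ℝ := (1 - x) / (1 - 4*x^2)
  let b1 : ℝ := x
  let b2 : ℝ := 1/2
  let b3 : ℝ := 1/2 - x
  let k1 : E := y
  let k2 : E := y + (h * a21) • f k1
  let k3 : E := y + (h * a31) • f k1 + (h * a32) • f k2
  y + (h * b1) • f k1 + (h * b2) • f k2 + (h * b3) • f k3

lemma eesStep_eq {E : Type*} [NormedAddCommGroup E] [NormedSpace ℝ E]
    (x : ℝ) (f : E → E) (h : ℝ) (y : E) :
    eesStep x f h y = y + (h * x) • f y
      + (h * (1/2)) • f (y + (h * ((1 + 2*x) / (4*(1 - x)))) • f y)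
      + (h * (1/2 - x)) • f (y + (h * ((4*x - 1)^2 / (4*(x - 1)*(1 - 4*x^2)))) • f y
          + (h * ((1 - x) / (1 - 4*x^2))) • f (y + (h * ((1 + 2*x) / (4*(1 - x)))) • f y)) :=
  rfl

/-- For a `C^∞` vector field `f : ℝ^q → ℝ^q` and a solution
`y` of `y' = f(y)` on a neighbourhood of `0` with `y 0 = y₀`, the local error
of the EES(2,5;x) scheme satisfies `‖Φ_h(y₀) − y(h)‖ = O(h³)` as `h → 0`,
i.e. the scheme has order at least 2. -/
theorem ees25_local_order_two (q : ℕ) (f : (Fin q → ℝ) → (Fin q → ℝ))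
    (hf : ContDiff ℝ (⊤ : ℕ∞) f)
    (x : ℝ) (hx1 : x ≠ 1) (hx2 : x ≠ 1/2) (hx3 : x ≠ -1/2)
    (y : ℝ → (Fin q → ℝ)) (y₀ : Fin q → ℝ) (s : Set ℝ) (hs : s ∈ nhds (0 : ℝ))
    (hsol : ∀ t ∈ s, HasDerivAt y (f (y t)) t) (hinit : y 0 = y₀) :
    (fun h : ℝ => eesStep x f h y₀ - y h) =O[nhds (0 : ℝ)] (fun h : ℝ => h ^ 3) := by

  -- coefficient identities
  have h1x : (1:ℝ) - x ≠ 0 := fun h => hx1 (by linarith)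
  have h12x : (1:ℝ) - 2*x ≠ 0 := fun h => hx2 (by linarith)
  have h12x' : (1:ℝ) + 2*x ≠ 0 := fun h => hx3 (by linarith)
  have hx1' : x - 1 ≠ 0 := fun h => hx1 (by linarith)
  have h4x : (1:ℝ) - 4*x^2 ≠ 0 := by
    have : (1:ℝ) - 4*x^2 = (1 - 2*x) * (1 + 2*x) := by ring
    rw [this]; exact mul_ne_zero h12x h12x'
  have hb : x + 1/2 + (1/2 - x) = (1:ℝ) := by ring
  have hco : (1/2) * ((1 + 2*x) / (4*(1 - x)))
      + (1/2 - x) * ((4*x - 1)^2 / (4*(x - 1)*(1 - 4*x^2)) + (1 - x) / (1 - 4*x^2))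
      = (1:ℝ)/2 := by
    have h4x'' : (1:ℝ) - x^2*4 ≠ 0 := by rwa [mul_comm] at h4x
    field_simp
    ring
  -- step A : quadratic expansion of f at y₀
  set D := fderiv ℝ f y₀ with hD
  have hD1 : ContDiffAt ℝ 1 (fderiv ℝ f) y₀ := (hf.fderiv_right (by exact WithTop.coe_le_coe.2 le_top)).contDiffAt
  obtain ⟨K, t0, ht0, hK⟩ := hD1.exists_lipschitzOnWith
  obtain ⟨δ, hδ, hball⟩ := Metric.mem_nhds_iff.1 ht0
  have hy₀t : y₀ ∈ t0 := mem_of_mem_nhds ht0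
  have hA : ∀ v : Fin q → ℝ, ‖v‖ < δ → ‖f (y₀ + v) - f y₀ - D v‖ ≤ K * ‖v‖ ^ 2 := by
    intro v hv
    have hsub : Metric.closedBall y₀ ‖v‖ ⊆ t0 := fun z hz =>
      hball (lt_of_le_of_lt (Metric.mem_closedBall.1 hz) hv)
    have hbound : ∀ z ∈ Metric.closedBall y₀ ‖v‖, ‖fderiv ℝ f z - D‖ ≤ (K:ℝ) * ‖v‖ := by
      intro z hz
      have h1 := hK.dist_le_mul z (hsub hz) y₀ hy₀t
      rw [dist_eq_norm] at h1
      refine le_trans h1 ?_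
      have := Metric.mem_closedBall.1 hz
      rw [dist_eq_norm] at this
      rw [dist_eq_norm]
      exact mul_le_mul_of_nonneg_left this K.2
    have hmem : y₀ + v ∈ Metric.closedBall y₀ ‖v‖ := by
      simp [Metric.mem_closedBall, dist_eq_norm]
    have := Convex.norm_image_sub_le_of_norm_hasFDerivWithin_le'
      (fun z _ => ((hf.differentiable (by simp) z).hasFDerivAt).hasFDerivWithinAt)
      hbound (convex_closedBall _ _) (Metric.mem_closedBall_self (norm_nonneg v)) hmem
    simpa [pow_two, mul_assoc] using this
  have hAO : (fun v => f (y₀ + v) - f y₀ - D v) =O[nhds (0 : Fin q → ℝ)]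
      fun v => ‖v‖ ^ 2 := by
    rw [isBigO_iff]
    refine ⟨K, Metric.eventually_nhds_iff.2 ⟨δ, hδ, fun {v} hv => ?_⟩⟩
    rw [dist_zero_right] at hv
    have := hA v hv
    simpa [abs_of_nonneg (pow_nonneg (norm_nonneg v) 2)] using this
  -- regularity of y
  set U := interior s with hU
  have hUo : IsOpen U := isOpen_interior
  have h0U : (0:ℝ) ∈ U := mem_interior_iff_mem_nhds.2 hs
  have hy' : ∀ t ∈ U, HasDerivAt y (f (y t)) t := fun t ht => hsol t (interior_subset ht)
  have hyn : ∀ n : ℕ, ContDiffOn ℝ n y U := by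
    intro n
    induction n with
    | zero =>
      exact contDiffOn_zero.2 fun t ht =>
        (hy' t ht).differentiableAt.continuousAt.continuousWithinAt
    | succ n ih =>
      rw [show ((n+1 : ℕ) : WithTop ℕ∞) = (n : WithTop ℕ∞) + 1 by push_cast; rfl,
        contDiffOn_succ_iff_deriv_of_isOpen hUo]
      refine ⟨fun t ht => ((hy' t ht).differentiableAt).differentiableWithinAt, by simp, ?_⟩
      exact ContDiffOn.congr ((hf.of_le (by exact WithTop.coe_le_coe.2 le_top)).comp_contDiffOn ih)
        fun t ht => (hy' t ht).deriv
  set c : Fin q → ℝ := f y₀ with hc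
  set w : Fin q → ℝ := D c with hw
  -- step B : Taylor expansion of y
  set G : ℝ → (Fin q → ℝ) := fun t => (fderiv ℝ f (y t)) (f (y t)) with hG
  have hG0 : G 0 = w := by simp only [hG, hinit]; rfl
  have hy1 : ContDiffAt ℝ 1 y 0 := (hyn 1).contDiffAt (hUo.mem_nhds h0U)
  have hGc1 : ContDiffAt ℝ 1 G 0 := by
    have h1 : ContDiffAt ℝ 1 (fun t => fderiv ℝ f (y t)) 0 :=
      ((hf.fderiv_right (by exact WithTop.coe_le_coe.2 le_top)).contDiffAt).comp 0 hy1
    have h2 : ContDiffAt ℝ 1 (fun t => f (y t)) 0 :=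
      ((hf.of_le (by simp) : ContDiff ℝ 1 f).contDiffAt).comp 0 hy1
    exact h1.clm_apply h2
  obtain ⟨K2, t2, ht2, hK2⟩ := hGc1.exists_lipschitzOnWith
  have hg''O : (fun t => G t - w) =O[nhds (0:ℝ)] fun h => h ^ 1 := by
    rw [isBigO_iff]
    refine ⟨K2, eventually_of_mem ht2 fun a ha => ?_⟩
    have := hK2.dist_le_mul a ha 0 (mem_of_mem_nhds ht2)
    rw [dist_eq_norm, dist_eq_norm, hG0] at this
    simpa using this
  have hg''d : ∀ᶠ t in nhds (0:ℝ), HasDerivAt (fun u => f (y u) - c - u • w) (G t - w) t := by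
    filter_upwards [hUo.mem_nhds h0U] with t ht
    have hfd : HasDerivAt (fun u => f (y u)) (G t) t :=
      ((hf.differentiable (by simp) (y t)).hasFDerivAt).comp_hasDerivAt t (hy' t ht)
    have hsw : HasDerivAt (fun u : ℝ => u • w) w t := by
      simpa using (hasDerivAt_id t).smul_const w
    exact (hfd.sub_const c).sub hsw
  have hg'0 : (fun t : ℝ => f (y t) - c - t • w) 0 = 0 := by
    simp [hinit, hc]
  have hB2 : (fun t : ℝ => f (y t) - c - t • w) =O[nhds (0:ℝ)] fun h => h ^ 2 :=
    mvstep 1 hg''d hg'0 hg''O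
  have hg'd : ∀ᶠ t in nhds (0:ℝ),
      HasDerivAt (fun u => y u - y₀ - u • c - (u^2/2) • w) (f (y t) - c - t • w) t := by
    filter_upwards [hUo.mem_nhds h0U] with t ht
    have hsc : HasDerivAt (fun u : ℝ => u • c) c t := by
      simpa using (hasDerivAt_id t).smul_const c
    have hq : HasDerivAt (fun u : ℝ => (u^2/2) • w) (t • w) t := by
      have h2 := ((hasDerivAt_pow 2 t).div_const 2).smul_const w
      norm_num at h2
      exact h2
    exact (((hy' t ht).sub_const y₀).sub hsc).sub hq
  have hg0 : (fun h : ℝ => y h - y₀ - h • c - (h^2/2) • w) 0 = 0 := by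
    simp [hinit]
  have hB : (fun h : ℝ => y h - y₀ - h • c - (h^2/2) • w) =O[nhds (0:ℝ)] fun h => h ^ 3 :=
    mvstep 2 hg'd hg0 hB2
  -- step C : expansion of the scheme
  have hC := stepC f y₀ D hf.continuous hAO
    ((1 + 2*x) / (4*(1 - x))) ((4*x - 1)^2 / (4*(x - 1)*(1 - 4*x^2))) ((1 - x) / (1 - 4*x^2))
    x (1/2) (1/2 - x) hb hco
  -- assembly
  have := hC.sub hB
  refine this.congr_left fun h => ?_
  rw [eesStep_eq]
  abel
end

section
/- Fix x ∈ ℝ with x ∉ {1, 1/2, −1/2} and let λ, μ ∈ ℂ. Applying one step of the simplified Runge–Kutta scheme with the EES(2,5;x) coefficients to the two-driver system with vector fields f₀(y) = λ·y (drift, with increment Δt ∈ ℝ) and f₁(y) = μ·y (diffusion, with increment ΔW ∈ ℝ), starting from y ∈ ℂ, yields exactly R(ρ)·y with ρ = λΔt + μΔW and R(ρ) = 1 + ρ + ρ²/2 + ρ³/8. In particular the one-step update for the linear test SDE is y ↦ R(λΔt + μΔW)·y, independently of x. -/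
/-- One step of the simplified Runge–Kutta scheme with the
EES(2,5;x) coefficients applied to the two-driver linear system
`f₀(y) = λ·y` (drift, increment `Δt`) and `f₁(y) = μ·y` (diffusion, increment
`ΔW`) equals `R(ρ)·y` with `ρ = λΔt + μΔW` and `R(ρ) = 1 + ρ + ρ²/2 + ρ³/8`,
independently of `x`. -/
theorem ees25_linear_sde_step (x : ℝ) (hx1 : x ≠ 1) (hx2 : x ≠ 1/2) (hx3 : x ≠ -1/2)
    (lam mu : ℂ) (dt dW : ℝ) (y : ℂ) :
    let a21 : ℝ := (1 + 2*x) / (4*(1 - x))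
    let a31 : ℝ := (4*x - 1)^2 / (4*(x - 1)*(1 - 4*x^2))
    let a32 : ℝ := (1 - x) / (1 - 4*x^2)
    let b1 : ℝ := x
    let b2 : ℝ := 1/2
    let b3 : ℝ := 1/2 - x
    let k1 : ℂ := y
    let k2 : ℂ := y + (a21 : ℂ) * (lam * k1 * (dt : ℂ) + mu * k1 * (dW : ℂ))
    let k3 : ℂ := y + (a31 : ℂ) * (lam * k1 * (dt : ℂ) + mu * k1 * (dW : ℂ))
                    + (a32 : ℂ) * (lam * k2 * (dt : ℂ) + mu * k2 * (dW : ℂ))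
    y + (b1 : ℂ) * (lam * k1 * (dt : ℂ) + mu * k1 * (dW : ℂ))
      + (b2 : ℂ) * (lam * k2 * (dt : ℂ) + mu * k2 * (dW : ℂ))
      + (b3 : ℂ) * (lam * k3 * (dt : ℂ) + mu * k3 * (dW : ℂ))
      = (1 + (lam * dt + mu * dW) + (lam * dt + mu * dW)^2 / 2
          + (lam * dt + mu * dW)^3 / 8) * y := by
  have h1 : (1 - (x:ℂ)) ≠ 0 := by
    intro h; apply hx1; have := sub_eq_zero.mp h; exact_mod_cast this.symm
  have h1' : ((x:ℂ) - 1) ≠ 0 := by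
    intro h; apply h1; linear_combination -h
  have h2 : (1 - 2*(x:ℂ)) ≠ 0 := by
    intro h; apply hx2
    have h' : (2:ℂ)*x = 1 := by linear_combination -h
    have h'' : (2:ℝ)*x = 1 := by exact_mod_cast h'
    linarith
  have h3 : (1 + 2*(x:ℂ)) ≠ 0 := by
    intro h; apply hx3
    have h' : (2:ℂ)*x = -1 := by linear_combination h
    have h'' : (2:ℝ)*x = -1 := by exact_mod_cast h'
    linarith
  have h4 : (1 - 4*(x:ℂ)^2) ≠ 0 := by
    intro h
    rcases mul_eq_zero.mp (show (1 - 2*(x:ℂ))*(1 + 2*x) = 0 by linear_combination h) with h'|h'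
    · exact h2 h'
    · exact h3 h'
  have hA : (1/2) * ((1 + 2*(x:ℂ)) / (4*(1 - x)))
      + (1/2 - x) * ((4*x - 1)^2 / (4*(x - 1)*(1 - 4*x^2)) + (1 - x) / (1 - 4*x^2)) = 1/2 := by
    have hP : (8:ℂ)*(x-1)*(1-4*x^2)^2 ≠ 0 :=
      mul_ne_zero (mul_ne_zero (by norm_num) h1') (pow_ne_zero 2 h4)
    have hu := mul_inv_cancel₀ hP
    field_simp
    linear_combination (-3 + 9*(x:ℂ) - 6*x^2) * mul_inv_cancel₀ h4
  have hB : (1/2 - (x:ℂ)) * ((1 - x) / (1 - 4*x^2)) * ((1 + 2*x) / (4*(1 - x))) = 1/8 := by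
    field_simp
    linear_combination (8:ℂ) * mul_inv_cancel₀ h4
  simp only
  push_cast
  linear_combination hA * ((lam*dt + mu*dW)^2 * y) + hB * ((lam*dt + mu*dW)^3 * y)
end

section
/- For every real ρ ∈ [−2, 0) one has |1 + ρ + ρ²/2 + ρ³/8| < 1. Consequently, for any real λ < 0 and step size h > 0 with λh ∈ [−2, 0), the EES(2,5;x) iterates for the linear test ODE dy = λy dt satisfy yₙ → 0, whereas for every real λh ≠ 0 the Reversible Heun iterates for the same test equation (with v₀ = y₀ ≠ 0) are unbounded. In particular, the stability region of EES(2,5) contains the real interval [−2, 0), which is disjoint from the stability region [−i, i] of Reversible Heun. -/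
open Filter

/-- Auxiliary: part 1 inequality. -/
lemma ees25_abs_lt_one {ρ : ℝ} (hρ : ρ ∈ Set.Ico (-2 : ℝ) 0) :
    |1 + ρ + ρ^2 / 2 + ρ^3 / 8| < 1 := by
  obtain ⟨h1, h2⟩ := hρ
  rw [abs_lt]
  constructor
  · nlinarith [sq_nonneg (ρ + 2), sq_nonneg ρ, sq_nonneg (ρ + 1)]
  · nlinarith [sq_nonneg (ρ + 2), sq_nonneg ρ]

/-- For every real `ρ ∈ [−2, 0)` one has
`|1 + ρ + ρ²/2 + ρ³/8| < 1`. Consequently, for real `λ < 0` and `h > 0` with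
`λh ∈ [−2, 0)` the EES(2,5;x) iterates for `dy = λy dt` tend to `0`, whereas
for every real `λh ≠ 0` the Reversible Heun iterates (with `v₀ = y₀ ≠ 0`) are
unbounded: the real interval `[−2, 0)` lies in the EES(2,5) stability region
but is disjoint from the Reversible Heun stability region `[−i, i]`. -/
theorem ees25_vs_reversible_heun_real_axis :
    (∀ ρ : ℝ, ρ ∈ Set.Ico (-2 : ℝ) 0 → |1 + ρ + ρ^2 / 2 + ρ^3 / 8| < 1) ∧
    (∀ (lam h : ℝ), lam < 0 → 0 < h → lam * h ∈ Set.Ico (-2 : ℝ) 0 →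
      ∀ y : ℕ → ℝ,
        (∀ n : ℕ, y (n + 1) =
          (1 + lam * h + (lam * h)^2 / 2 + (lam * h)^3 / 8) * y n) →
        Tendsto y atTop (nhds 0)) ∧
    (∀ (lam h : ℝ), 0 < h → lam * h ≠ 0 →
      ∀ y v : ℕ → ℝ, y 0 ≠ 0 → v 0 = y 0 →
        (∀ n : ℕ, v (n + 1) = 2 * y n - v n + lam * h * v n) →
        (∀ n : ℕ, y (n + 1) = y n + lam * h / 2 * (v n + v (n + 1))) →
        ¬ ∃ C : ℝ, ∀ n : ℕ, |y n| ≤ C ∧ |v n| ≤ C) := by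
  refine ⟨fun ρ hρ => ees25_abs_lt_one hρ, ?_, ?_⟩
  · -- Part 2: geometric decay
    intro lam h _ _ hmem y hy
    set R : ℝ := 1 + lam * h + (lam * h)^2 / 2 + (lam * h)^3 / 8 with hR
    have hRlt : |R| < 1 := ees25_abs_lt_one hmem
    have hyn : ∀ n, y n = R ^ n * y 0 := by
      intro n
      induction n with
      | zero => simp
      | succ n ih => rw [hy n, ih]; ring
    have : Tendsto (fun n => R ^ n * y 0) atTop (nhds 0) := by
      simpa using (tendsto_pow_atTop_nhds_zero_of_abs_lt_one hRlt).mul_const (y 0)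
    exact this.congr fun n => (hyn n).symm
  · -- Part 3: Reversible Heun unbounded for real a = lam*h ≠ 0
    intro lam h _ ha y v hy0 hv0 hv hy
    set a : ℝ := lam * h with haa
    -- matrix form
    have hv' : ∀ n, v (n + 1) = 2 * y n + (a - 1) * v n := by
      intro n; rw [hv n]; ring
    have hy' : ∀ n, y (n + 1) = (1 + a) * y n + a^2 / 2 * v n := by
      intro n; rw [hy n, hv' n]; ring
    -- second order recurrence
    have hrec : ∀ n, y (n + 2) = 2 * a * y (n + 1) + y n := by
      intro n
      have h1 := hy' n
      have h2 : y (n + 2) = (1 + a) * y (n + 1) + a ^ 2 / 2 * v (n + 1) :=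
        hy' (n + 1)
      have h3 := hv' n
      rw [h3] at h2
      linear_combination h2 + (1 - a) * h1
    -- y 1 value
    have hy1 : y 1 = (1 + a + a^2 / 2) * y 0 := by
      have := hy' 0; rw [this, hv0]; ring
    -- eigenvalues
    obtain ⟨μ, r, hsum, hprod, hμ⟩ :
        ∃ μ r : ℝ, μ + r = 2 * a ∧ μ * r = -1 ∧ 1 < |μ| := by
      set s : ℝ := Real.sqrt (a^2 + 1) with hsdef
      have hs2 : s^2 = a^2 + 1 := Real.sq_sqrt (by positivity)
      have hs0 : 0 ≤ s := Real.sqrt_nonneg _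
      rcases lt_or_gt_of_ne ha with hneg | hpos
      · refine ⟨a - s, a + s, by ring, by nlinarith, ?_⟩
        have h1 : a - s < 0 := by nlinarith
        rw [abs_of_neg h1]
        nlinarith [sq_nonneg (s - 1 - a), sq_nonneg (s + 1 + a)]
      · refine ⟨a + s, a - s, by ring, by nlinarith, ?_⟩
        have h1 : 0 < a + s := by nlinarith
        rw [abs_of_pos h1]
        nlinarith [sq_nonneg (s - 1)]
    -- projection onto unstable direction
    set d : ℕ → ℝ := fun n => y (n + 1) - r * y n with hd
    have hdstep : ∀ n, d (n + 1) = μ * d n := by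
      intro n
      simp only [hd]
      have := hrec n
      have h2a : 2 * a = μ + r := hsum.symm
      rw [this, h2a]
      linear_combination y n * hprod
    have hdn : ∀ n, d n = μ ^ n * d 0 := by
      intro n
      induction n with
      | zero => simp
      | succ n ih => rw [hdstep n, ih]; ring
    -- d 0 ≠ 0
    have hd0 : d 0 ≠ 0 := by
      intro h0
      have : (1 + a + a^2 / 2 - r) * y 0 = 0 := by
        simp only [hd] at h0; rw [hy1] at h0; linarith [h0]
      have hr : r = 1 + a + a^2 / 2 := by
        rcases mul_eq_zero.mp this with h | h
        · linarith
        · exact absurd h hy0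
      have hrq : r^2 - 2 * a * r - 1 = 0 := by nlinarith [hsum, hprod]
      have ha4 : a^4 = 0 := by nlinarith [hrq, hr]
      exact ha (by simpa using pow_eq_zero_iff (n := 4) (by norm_num) |>.mp ha4)
    -- derive contradiction from boundedness
    rintro ⟨C, hC⟩
    have hC0 : 0 ≤ C := le_trans (abs_nonneg _) (hC 0).1
    have hd0pos : 0 < |d 0| := abs_pos.mpr hd0
    obtain ⟨n, hn⟩ := pow_unbounded_of_one_lt ((C + |r| * C) / |d 0|) hμ
    have hdbound : |d n| ≤ C + |r| * C := by
      calc |d n| ≤ |y (n + 1)| + |r * y n| := abs_sub _ _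
        _ = |y (n + 1)| + |r| * |y n| := by rw [abs_mul]
        _ ≤ C + |r| * C := by
            have := (hC (n + 1)).1
            have := (hC n).1
            have := abs_nonneg r
            nlinarith [(hC (n+1)).1, (hC n).1, abs_nonneg r]
    have : C + |r| * C < |d n| := by
      rw [hdn n, abs_mul, abs_pow]
      calc C + |r| * C = (C + |r| * C) / |d 0| * |d 0| := by
            field_simp
        _ < |μ| ^ n * |d 0| := by
            exact mul_lt_mul_of_pos_right hn hd0pos
    linarith
end

section
/- The Reversible Heun method is algebraically reversible: let g, f : ℝ × ℝ^q → ℝ^q be arbitrary functions, let t₀, t₁, Δt, ΔW ∈ ℝ, and suppose (y₁, v₁) is obtained from (y₀, v₀) ∈ ℝ^q × ℝ^q by the forward step v₁ = 2y₀ − v₀ + g(t₀, v₀)Δt + f(t₀, v₀)ΔW, y₁ = y₀ + (1/2)(g(t₀, v₀) + g(t₁, v₁))Δt + (1/2)(f(t₀, v₀) + f(t₁, v₁))ΔW. Then the backward step with negated increments exactly recovers the previous state: ṽ := 2y₁ − v₁ − g(t₁, v₁)Δt − f(t₁, v₁)ΔW satisfies ṽ = v₀, and ỹ := y₁ − (1/2)(g(t₁,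 v₁) + g(t₀, ṽ))Δt − (1/2)(f(t₁, v₁) + f(t₀, ṽ))ΔW satisfies ỹ = y₀. -/
/-- The Reversible Heun method is algebraically reversible:
the backward step with negated increments exactly recovers the previous
state `(y₀, v₀)` from `(y₁, v₁)`. -/
theorem reversible_heun_algebraically_reversible (q : ℕ)
    (g f : ℝ → (Fin q → ℝ) → (Fin q → ℝ)) (t0 t1 dt dW : ℝ)
    (y0 v0 y1 v1 : Fin q → ℝ)
    (hv1 : v1 = (2 : ℝ) • y0 - v0 + dt • g t0 v0 + dW • f t0 v0)
    (hy1 : y1 = y0 + (dt / 2) • (g t0 v0 + g t1 v1) + (dW / 2) • (f t0 v0 + f t1 v1)) :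
    ((2 : ℝ) • y1 - v1 - dt • g t1 v1 - dW • f t1 v1 = v0) ∧
    (let vtil : Fin q → ℝ := (2 : ℝ) • y1 - v1 - dt • g t1 v1 - dW • f t1 v1
     y1 - (dt / 2) • (g t1 v1 + g t0 vtil) - (dW / 2) • (f t1 v1 + f t0 vtil) = y0) := by
  have hv : (2 : ℝ) • y1 - v1 - dt • g t1 v1 - dW • f t1 v1 = v0 := by
    subst hy1; subst hv1
    ext i
    simp [Pi.add_apply, Pi.sub_apply, Pi.smul_apply, smul_eq_mul]
    ring
  refine ⟨hv, ?_⟩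
  simp only [hv]
  subst hy1
  ext i
  simp [Pi.add_apply, Pi.sub_apply, Pi.smul_apply, smul_eq_mul]
  ring
end
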